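/- arXiv:1402.2125 — 5 statements merged into one kernel-verified Lean document; each statement's English description precedes it below -/
import Mathlib

section
/- For any totally irrational rotation α of 𝕋^s, every special region for α is a bounded remainder set for the rotation T(x) = x + α. -/
/-!
A time `n` is a visit of the orbit of `x` to `A` (mod `ℤ^s`) iff some `ℓ ∈ Λ` with last
coordinate `n` has `x + φ ℓ ∈ A`. Write `ℓ = ∑ cᵢ vᵢ`. The vectors `φ v₁, …, φ v_s` form a basis
of `ℝ^s` whose fundamental parallelotope is `A`, so for each value `k` of `c_{s+1}` exactly one
choice of `c₁, …, c_s` works, namely `cᵢ = -⌊uᵢ + k tᵢ⌋`, where `u` and `t` are the coordinates of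
`x` and of `φ v_{s+1}`. Hence the visit times are the values of
`visitTime a b u t k = k a - ∑ ⌊uᵢ + k tᵢ⌋ bᵢ`, where `a` and `bᵢ` are the last coordinates of
`v_{s+1}` and `vᵢ`. By (S4) this is strictly increasing in `k`, and it stays within `∑ |bᵢ|` of
`k γ + const`, where `γ = a - ∑ tᵢ bᵢ`. So the number of visits before `N` is `N / γ + O(1)`, and
`1 / γ = |A|` because `γ · |det (φ vᵢ)| = |det (vᵢ)| = 1`.
-/

open MeasureTheory

noncomputable section

/-- Embedding of an integer vector into `ℝ^s`. -/
def intVec (s : ℕ) (m : Fin s → ℤ) : Fin s → ℝ := fun i => (m i : ℝ)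

/-- `y` belongs to `A` modulo `ℤ^s`. -/
def ModMem (s : ℕ) (y : Fin s → ℝ) (A : Set (Fin s → ℝ)) : Prop :=
  ∃ m : Fin s → ℤ, y + intVec s m ∈ A

/-- `α` is totally irrational: `1, α 0, …, α (s-1)` are `ℚ`-linearly independent. -/
def TotallyIrrational (s : ℕ) (α : Fin s → ℝ) : Prop :=
  ∀ (m : Fin s → ℤ) (n : ℤ), (∑ i, (m i : ℝ) * α i) + (n : ℝ) = 0 → m = 0 ∧ n = 0

/-- `A ⊆ 𝕋^s` (given by a lift in `ℝ^s`) is a bounded remainder set for the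
rotation by `α`. -/
def IsBRS (s : ℕ) (α : Fin s → ℝ) (A : Set (Fin s → ℝ)) : Prop :=
  ∃ C : ℝ, ∀ (x : Fin s → ℝ) (N : ℕ),
    |(∑ n ∈ Finset.range N,
        Set.indicator {y : Fin s → ℝ | ModMem s y A} (fun _ => (1:ℝ)) (x + n • α))
      - N * (volume A).toReal| ≤ C

end


noncomputable section

/-- The vector `α' = (α, 1) ∈ ℝ^{s+1}`. -/
def alphaExt (s : ℕ) (α : Fin s → ℝ) : Fin (s+1) → ℝ := Fin.snoc α 1

/-- The lattice `Λ ⊆ ℝ^{s+1}` generated by `(α,1)` and `e_1, …, e_s`. -/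
def Lam (s : ℕ) (α : Fin s → ℝ) : Set (Fin (s+1) → ℝ) :=
  {x | ∃ (n : ℤ) (a : Fin s → ℤ),
    x = (n : ℝ) • alphaExt s α + Fin.snoc (fun i => (a i : ℝ)) 0}

/-- Projection `φ : ℝ^{s+1} → ℝ^s` to the first `s` coordinates. -/
def phiProj (s : ℕ) (x : Fin (s+1) → ℝ) : Fin s → ℝ := fun i => x i.castSucc

/-- Half-open parallelotope generated by `v_1, …, v_m`. -/
def Ptope {m : ℕ} {E : Type*} [AddCommMonoid E] [Module ℝ E]
    (v : Fin m → E) : Set E :=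
  {x | ∃ t : Fin m → ℝ, (∀ i, 0 ≤ t i ∧ t i < 1) ∧ x = ∑ i, t i • v i}

/-- The set of `ℤ`-linear combinations of a family of vectors. -/
def zSpanSet {m : ℕ} {E : Type*} [AddCommMonoid E] [Module ℝ E]
    (v : Fin m → E) : Set E :=
  {x | ∃ c : Fin m → ℤ, x = ∑ i, (c i : ℝ) • v i}

/-- The special region associated to a basis `v` of `Λ`:
`A = φ(P(v_1,…,v_s))` (condition (S1)). -/
def specialRegionOf (s : ℕ) (v : Fin (s+1) → (Fin (s+1) → ℝ)) : Set (Fin s → ℝ) :=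
  (phiProj s) '' (Ptope (fun i : Fin s => v i.castSucc))

/-- Conditions (S2)-(S4) making `v` a basis defining a special region for `α`. -/
def IsSpecialBasis (s : ℕ) (α : Fin s → ℝ) (v : Fin (s+1) → (Fin (s+1) → ℝ)) : Prop :=
  (phiProj s (v (Fin.last s)) ∈ specialRegionOf s v) ∧
  (zSpanSet v = Lam s α) ∧
  (∀ I : Finset (Fin s),
    0 < v (Fin.last s) (Fin.last s) - ∑ i ∈ I, v i.castSucc (Fin.last s))

/-- `A` is a special region for `α`. -/
def IsSpecialRegion (s : ℕ) (α : Fin s → ℝ) (A : Set (Fin s → ℝ)) : Prop :=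
  ∃ v : Fin (s+1) → (Fin (s+1) → ℝ), IsSpecialBasis s α v ∧ A = specialRegionOf s v

/-- The affine hyperplane `H_k = span(v_1,…,v_s) + k v_{s+1}`. -/
def Hplane (s : ℕ) (v : Fin (s+1) → (Fin (s+1) → ℝ)) (k : ℤ) : Set (Fin (s+1) → ℝ) :=
  {x | ∃ c : Fin s → ℝ, x = (∑ i, c i • v i.castSucc) + (k : ℝ) • v (Fin.last s)}

end

open Finset

theorem sub_sub_one_lt_card_Ico_ceil (p q : ℝ) : q - p - 1 < (#(Ico ⌈p⌉ ⌈q⌉) : ℝ) := by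
  have h : ((⌈q⌉ - ⌈p⌉ : ℤ) : ℝ) ≤ ((⌈q⌉ - ⌈p⌉).toNat : ℤ) := by
    exact_mod_cast Int.self_le_toNat _
  rw [Int.card_Ico]
  push_cast at h
  linarith [Int.le_ceil q, Int.ceil_lt_add_one p]

theorem card_Ico_ceil_lt_sub_add_one {p q : ℝ} (hpq : p ≤ q) :
    (#(Ico ⌈p⌉ ⌈q⌉) : ℝ) < q - p + 1 := by
  have h : (((⌈q⌉ - ⌈p⌉).toNat : ℤ) : ℝ) = ((⌈q⌉ - ⌈p⌉ : ℤ) : ℝ) := by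
    rw [Int.toNat_of_nonneg (sub_nonneg.2 (Int.ceil_mono hpq))]
  rw [Int.card_Ico]
  push_cast at h
  linarith [Int.ceil_lt_add_one q, Int.le_ceil p]

theorem abs_ncard_setOf_mem_Ico_sub_le {F : ℤ → ℝ} {c γ R : ℝ} (hγ : 0 < γ)
    (hF : ∀ k : ℤ, |F k - (c + k * γ)| ≤ R) {a b : ℝ} (hab : a ≤ b) :
    |({k : ℤ | F k ∈ Set.Ico a b}.ncard : ℝ) - (b - a) / γ| ≤ 2 * R / γ + 1 := by
  set K := {k : ℤ | F k ∈ Set.Ico a b}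
  have hR : 0 ≤ R := (abs_nonneg _).trans (hF 0)
  have hFk : ∀ k, c + k * γ - R ≤ F k ∧ F k ≤ c + k * γ + R := fun k => by
    constructor <;> linarith [abs_le.1 (hF k)]
  have hout : K ⊆ Ico ⌈(a - c - R) / γ⌉ ⌈(b - c + R) / γ⌉ := by
    intro k ⟨hak, hkb⟩
    simp only [coe_Ico, Set.mem_Ico, Int.ceil_le, Int.lt_ceil, div_le_iff₀ hγ, lt_div_iff₀ hγ]
    constructor <;> linarith [hFk k]
  have hin : (Ico ⌈(a - c + R) / γ⌉ ⌈(b - c - R) / γ⌉ : Set ℤ) ⊆ K := by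
    intro k hk
    simp only [coe_Ico, Set.mem_Ico, Int.ceil_le, Int.lt_ceil, div_le_iff₀ hγ,
      lt_div_iff₀ hγ] at hk
    constructor <;> linarith [hFk k]
  have hle : (K.ncard : ℝ) ≤ #(Ico ⌈(a - c - R) / γ⌉ ⌈(b - c + R) / γ⌉) := by
    rw [← Set.ncard_coe_finset]
    exact_mod_cast Set.ncard_le_ncard hout (finite_toSet _)
  have hge : (#(Ico ⌈(a - c + R) / γ⌉ ⌈(b - c - R) / γ⌉) : ℝ) ≤ K.ncard := by
    rw [← Set.ncard_coe_finset]
    exact_mod_cast Set.ncard_le_ncard hin ((finite_toSet _).subset hout)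
  have hupper := card_Ico_ceil_lt_sub_add_one
    (div_le_div_of_nonneg_right (by linarith) hγ.le : (a - c - R) / γ ≤ (b - c + R) / γ)
  have hlower := sub_sub_one_lt_card_Ico_ceil ((a - c + R) / γ) ((b - c - R) / γ)
  have e₁ : (b - c + R) / γ - (a - c - R) / γ = (b - a) / γ + 2 * R / γ := by ring
  have e₂ : (b - c - R) / γ - (a - c + R) / γ = (b - a) / γ - 2 * R / γ := by ring
  rw [abs_le]
  constructor <;> linarith

theorem card_filter_range_eq_ncard {P : ℕ → Prop} [DecidablePred P] {F : ℤ → ℝ}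
    (hF : Function.Injective F) (hP : ∀ n : ℕ, P n ↔ ∃ k, F k = n)
    (hint : ∀ k, ∃ n : ℤ, F k = n) (N : ℕ) :
    #((range N).filter P) = {k : ℤ | F k ∈ Set.Ico 0 (N : ℝ)}.ncard := by
  rw [← Set.ncard_coe_finset, ← Set.ncard_image_of_injective _ (Nat.cast_injective (R := ℝ)),
    ← Set.ncard_image_of_injective _ hF]
  congr 1
  ext r
  simp only [Set.mem_image, coe_filter, mem_range, Set.mem_ofPred_eq, Set.mem_Ico]
  constructor
  · rintro ⟨n, ⟨hn, hPn⟩, rfl⟩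
    obtain ⟨k, hk⟩ := (hP n).1 hPn
    exact ⟨k, ⟨hk ▸ n.cast_nonneg, hk ▸ Nat.cast_lt.2 hn⟩, hk⟩
  · rintro ⟨k, ⟨h0, hN⟩, rfl⟩
    obtain ⟨m, hm⟩ := hint k
    rw [hm] at h0 hN ⊢
    lift m to ℕ using (by exact_mod_cast h0)
    exact ⟨m, ⟨by exact_mod_cast hN, (hP m).2 ⟨k, mod_cast hm⟩⟩, by norm_cast⟩

theorem sum_mul_lt_of_forall_sum_lt {ι : Type*} [Fintype ι] {a : ℝ} {b t : ι → ℝ}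
    (hb : ∀ I : Finset ι, ∑ i ∈ I, b i < a) (ht : ∀ i, t i ∈ Set.Icc 0 1) :
    ∑ i, t i * b i < a := by
  classical
  calc ∑ i, t i * b i ≤ ∑ i ∈ univ.filter (fun i => 0 < b i), b i := by
        rw [sum_filter]
        gcongr with i
        split_ifs with h
        · exact mul_le_of_le_one_left h.le (ht i).2
        · exact mul_nonpos_of_nonneg_of_nonpos (ht i).1 (not_lt.1 h)
    _ < a := hb _

section VisitTime

variable {ι : Type*} [Fintype ι]

noncomputable def visitTime (a : ℝ) (b u t : ι → ℝ) (k : ℤ) : ℝ :=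
  k * a - ∑ i, ⌊u i + k * t i⌋ * b i

theorem intCast_floor_add_sub_floor_mem_Icc (y : ℝ) {t : ℝ} (ht : t ∈ Set.Ico 0 1) :
    ((⌊y + t⌋ : ℝ) - ⌊y⌋) ∈ Set.Icc 0 1 := by
  have h₀ : ⌊y⌋ ≤ ⌊y + t⌋ := Int.floor_mono (by linarith [ht.1])
  have h₁ : ⌊y + t⌋ ≤ ⌊y⌋ + 1 := by
    rw [← Int.floor_add_one]; exact Int.floor_mono (by linarith [ht.2])
  constructor
  · rw [sub_nonneg]; exact_mod_cast h₀
  · rw [sub_le_iff_le_add']; exact_mod_cast h₁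

theorem visitTime_strictMono {a : ℝ} {b u t : ι → ℝ} (hb : ∀ I : Finset ι, ∑ i ∈ I, b i < a)
    (ht : ∀ i, t i ∈ Set.Ico 0 1) : StrictMono (visitTime a b u t) := by
  refine strictMono_int_of_lt_succ fun k => ?_
  have hshift : ∀ i, u i + ((k + 1 : ℤ) : ℝ) * t i = (u i + k * t i) + t i := fun i => by
    push_cast; ring
  have hstep : visitTime a b u t (k + 1) - visitTime a b u t k
      = a - ∑ i, ((⌊(u i + k * t i) + t i⌋ : ℝ) - ⌊u i + k * t i⌋) * b i := by
    simp only [visitTime, hshift, sub_mul, Finset.sum_sub_distrib]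
    push_cast
    ring
  have := sum_mul_lt_of_forall_sum_lt hb fun i =>
    intCast_floor_add_sub_floor_mem_Icc (u i + k * t i) (ht i)
  linarith

theorem abs_visitTime_sub_le (a : ℝ) (b u t : ι → ℝ) (k : ℤ) :
    |visitTime a b u t k - (-∑ i, u i * b i + k * (a - ∑ i, t i * b i))| ≤ ∑ i, |b i| := by
  have hfract : visitTime a b u t k - (-∑ i, u i * b i + k * (a - ∑ i, t i * b i))
      = ∑ i, Int.fract (u i + k * t i) * b i := by
    simp only [visitTime, Int.fract, sub_mul, add_mul, Finset.sum_sub_distrib,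
      Finset.sum_add_distrib, mul_sub, Finset.mul_sum, mul_assoc]
    ring
  rw [hfract]
  refine (Finset.abs_sum_le_sum_abs _ _).trans (Finset.sum_le_sum fun i _ => ?_)
  rw [abs_mul, abs_of_nonneg (Int.fract_nonneg _)]
  exact mul_le_of_le_one_left (abs_nonneg _) (Int.fract_lt_one _).le

end VisitTime

theorem mem_zSpanSet_self {n : ℕ} (v : Fin n → Fin n → ℝ) (i : Fin n) : v i ∈ zSpanSet v :=
  ⟨Pi.single i 1, by simp [Pi.single_apply]⟩

theorem exists_det_eq_intCast_mul {n : ℕ} {v w : Fin n → Fin n → ℝ}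
    (h : ∀ i, v i ∈ zSpanSet w) : ∃ p : ℤ, (Matrix.of v).det = p * (Matrix.of w).det := by
  choose P hP using h
  refine ⟨(Matrix.of P).det, ?_⟩
  have hvP : Matrix.of v = (Matrix.of P).map (Int.cast : ℤ → ℝ) * Matrix.of w := by
    ext i j
    simp [Matrix.mul_apply, hP i, Finset.sum_apply]
  rw [hvP, Matrix.det_mul, Int.cast_det]

theorem abs_det_eq_of_zSpanSet_eq {n : ℕ} {v w : Fin n → Fin n → ℝ}
    (h : zSpanSet v = zSpanSet w) : |(Matrix.of v).det| = |(Matrix.of w).det| := by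
  obtain ⟨p, hp⟩ := exists_det_eq_intCast_mul fun i => h ▸ mem_zSpanSet_self v i
  obtain ⟨q, hq⟩ := exists_det_eq_intCast_mul fun i => h.symm ▸ mem_zSpanSet_self w i
  rcases eq_or_ne (Matrix.of w).det 0 with hw | hw
  · rw [hp, hw, mul_zero]
  · have hpq : ((p * q : ℤ) : ℝ) = 1 := by
      apply mul_right_cancel₀ hw
      calc ((p * q : ℤ) : ℝ) * (Matrix.of w).det = q * (p * (Matrix.of w).det) := by
            push_cast; ring
        _ = 1 * (Matrix.of w).det := by rw [← hp, ← hq, one_mul]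
    rcases Int.eq_one_or_neg_one_of_mul_eq_one (mod_cast hpq) with rfl | rfl <;> simp [hp]

theorem det_updateRow_last_single {R : Type*} [CommRing R] {n : ℕ}
    (A : Matrix (Fin (n + 1)) (Fin (n + 1)) R) :
    (A.updateRow (Fin.last n) (Pi.single (Fin.last n) 1)).det
      = (A.submatrix Fin.castSucc Fin.castSucc).det := by
  rw [Matrix.det_succ_row _ (Fin.last n), Finset.sum_eq_single (Fin.last n)]
  · simp only [Matrix.updateRow_self, Pi.single_eq_same, Fin.val_last, ← two_mul, pow_mul]
    simp only [neg_one_sq, one_pow, one_mul, Fin.succAbove_last]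
    congr 1
    ext i j
    simp [(Fin.castSucc_lt_last i).ne]
  · intro j _ hj
    simp [hj]
  · simp

def stdGens (s : ℕ) (α : Fin s → ℝ) : Fin (s + 1) → Fin (s + 1) → ℝ :=
  Fin.snoc (fun j : Fin s => Pi.single j.castSucc 1) (alphaExt s α)

theorem sum_smul_stdGens {s : ℕ} (α : Fin s → ℝ) (c : Fin (s + 1) → ℤ) :
    ∑ i, (c i : ℝ) • stdGens s α i
      = (c (Fin.last s) : ℝ) • alphaExt s α + Fin.snoc (fun j => (c j.castSucc : ℝ)) 0 := by
  ext k
  induction k using Fin.lastCases <;>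
    simp [Fin.sum_univ_castSucc, stdGens, Finset.sum_apply, Pi.single_apply, add_comm]

theorem Lam_eq_zSpanSet_stdGens {s : ℕ} (α : Fin s → ℝ) : Lam s α = zSpanSet (stdGens s α) := by
  ext x
  constructor
  · rintro ⟨n, a, rfl⟩
    exact ⟨Fin.snoc a n, by simp [sum_smul_stdGens]⟩
  · rintro ⟨c, rfl⟩
    exact ⟨c (Fin.last s), fun j => c j.castSucc, sum_smul_stdGens α c⟩

theorem det_stdGens {s : ℕ} (α : Fin s → ℝ) : (Matrix.of (stdGens s α)).det = 1 := by
  rw [Matrix.det_of_isLowerTriangular]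
  · simp [Fin.prod_univ_castSucc, stdGens, alphaExt]
  · intro i j hji
    have hij : i < j := OrderDual.toDual_lt_toDual.1 hji
    obtain ⟨i, rfl⟩ := Fin.exists_castSucc_eq.2 (hij.trans_le (Fin.le_last _)).ne
    simp [stdGens, hij.ne']

theorem abs_det_eq_one_of_zSpanSet_eq_Lam {s : ℕ} {α : Fin s → ℝ}
    {v : Fin (s + 1) → Fin (s + 1) → ℝ} (h : zSpanSet v = Lam s α) :
    |(Matrix.of v).det| = 1 := by
  rw [abs_det_eq_of_zSpanSet_eq (h.trans (Lam_eq_zSpanSet_stdGens α)), det_stdGens, abs_one]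

theorem exists_intCast_eq_last_of_mem_Lam {s : ℕ} {α : Fin s → ℝ} {ℓ : Fin (s + 1) → ℝ}
    (h : ℓ ∈ Lam s α) : ∃ n : ℤ, ℓ (Fin.last s) = n := by
  obtain ⟨n, a, rfl⟩ := h
  exact ⟨n, by simp [alphaExt]⟩

theorem modMem_add_smul_iff {s : ℕ} {α : Fin s → ℝ} {A : Set (Fin s → ℝ)} {x : Fin s → ℝ}
    {n : ℤ} : ModMem s (x + (n : ℝ) • α) A ↔
      ∃ ℓ ∈ Lam s α, ℓ (Fin.last s) = n ∧ x + phiProj s ℓ ∈ A := by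
  have hphi : ∀ m : Fin s → ℤ, phiProj s ((n : ℝ) • alphaExt s α + Fin.snoc (fun i => (m i : ℝ)) 0)
      = (n : ℝ) • α + intVec s m := fun m => by
    ext i; simp [phiProj, alphaExt, intVec]
  constructor
  · rintro ⟨m, hm⟩
    exact ⟨_, ⟨n, m, rfl⟩, by simp [alphaExt], by rwa [hphi, ← add_assoc]⟩
  · rintro ⟨_, ⟨n', m, rfl⟩, hn, hmem⟩
    obtain rfl : n' = n := by simpa [alphaExt] using hn
    exact ⟨m, by rwa [hphi, ← add_assoc] at hmem⟩

section Geometry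

variable {s : ℕ}

theorem phiProj_sum_smul {ι : Type*} [Fintype ι] (c : ι → ℝ) (w : ι → Fin (s + 1) → ℝ) :
    phiProj s (∑ i, c i • w i) = ∑ i, c i • phiProj s (w i) := by
  ext j
  simp [phiProj, Finset.sum_apply]

theorem mem_specialRegionOf_iff {v : Fin (s + 1) → Fin (s + 1) → ℝ} {y : Fin s → ℝ} :
    y ∈ specialRegionOf s v ↔
      ∃ t : Fin s → ℝ, (∀ i, t i ∈ Set.Ico 0 1) ∧ y = ∑ i, t i • phiProj s (v i.castSucc) := by
  simp only [specialRegionOf, Ptope, Set.mem_image, Set.mem_ofPred_eq]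
  constructor
  · rintro ⟨_, ⟨t, ht, rfl⟩, rfl⟩
    exact ⟨t, ht, phiProj_sum_smul _ _⟩
  · rintro ⟨t, ht, rfl⟩
    exact ⟨_, ⟨t, ht, rfl⟩, phiProj_sum_smul _ _⟩

theorem exists_basis_coe_eq_of_det_ne_zero {ι : Type*} [Fintype ι] [DecidableEq ι]
    {b : ι → ι → ℝ} (h : (Matrix.of b).det ≠ 0) : ∃ B : Module.Basis ι ℝ (ι → ℝ), ⇑B = b :=
  ⟨basisOfLinearIndependentOfCardEqFinrank' b
      (Matrix.linearIndependent_rows_iff_isUnit.2 ((Matrix.isUnit_iff_isUnit_det _).2 h.isUnit))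
      (by simp),
    coe_basisOfLinearIndependentOfCardEqFinrank' _ _ _⟩

variable {v : Fin (s + 1) → Fin (s + 1) → ℝ} {B : Module.Basis (Fin s) ℝ (Fin s → ℝ)}

theorem specialRegionOf_eq_fundamentalDomain (hB : ∀ i, B i = phiProj s (v i.castSucc)) :
    specialRegionOf s v = ZSpan.fundamentalDomain B := by
  ext y
  simp only [mem_specialRegionOf_iff, ZSpan.mem_fundamentalDomain, ← hB]
  constructor
  · rintro ⟨t, ht, rfl⟩
    rwa [B.repr_sum_self]
  · exact fun h => ⟨_, h, (B.sum_repr y).symm⟩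

theorem add_phiProj_sum_mem_fundamentalDomain_iff (hB : ∀ i, B i = phiProj s (v i.castSucc))
    (x : Fin s → ℝ) (c : Fin (s + 1) → ℤ) :
    x + phiProj s (∑ i, (c i : ℝ) • v i) ∈ ZSpan.fundamentalDomain B ↔
      ∀ i, c i.castSucc =
        -⌊B.repr x i + c (Fin.last s) * B.repr (phiProj s (v (Fin.last s))) i⌋ := by
  have hrepr : ∀ i, B.repr (x + phiProj s (∑ i, (c i : ℝ) • v i)) i
      = B.repr x i + c (Fin.last s) * B.repr (phiProj s (v (Fin.last s))) i + c i.castSucc := by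
    intro i
    rw [phiProj_sum_smul, Fin.sum_univ_castSucc]
    simp [← hB, Finsupp.single_apply]
    ring
  simp only [ZSpan.mem_fundamentalDomain, hrepr]
  refine forall_congr' fun i => ?_
  rw [← Int.floor_eq_zero_iff, Int.floor_add_intCast]
  omega

end Geometry

section SpecialBasis

variable {s : ℕ} {α : Fin s → ℝ} {v : Fin (s + 1) → Fin (s + 1) → ℝ}

theorem det_eq_mul_det_of_phiProj_eq_sum {t : Fin s → ℝ}
    (ht : phiProj s (v (Fin.last s)) = ∑ i, t i • phiProj s (v i.castSucc)) :
    (Matrix.of v).det = (v (Fin.last s) (Fin.last s) - ∑ i, t i * v i.castSucc (Fin.last s))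
      * (Matrix.of fun i => phiProj s (v i.castSucc)).det := by
  have hrow : Matrix.of v (Fin.last s) = ∑ k, (Fin.snoc t 0 : Fin (s + 1) → ℝ) k • Matrix.of v k
      + (v (Fin.last s) (Fin.last s) - ∑ i, t i * v i.castSucc (Fin.last s))
        • Pi.single (Fin.last s) 1 := by
    ext j
    induction j using Fin.lastCases with
    | last => simp [Fin.sum_univ_castSucc, Finset.sum_apply]
    | cast j =>
      have := congrFun ht j
      simp only [phiProj, Finset.sum_apply, Pi.smul_apply, smul_eq_mul] at this
      simp [Fin.sum_univ_castSucc, Finset.sum_apply, this, (Fin.castSucc_lt_last j).ne]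
  rw [← Matrix.updateRow_eq_self (Matrix.of v) (Fin.last s), hrow, Matrix.det_updateRow_add,
    Matrix.det_updateRow_sum, Matrix.det_updateRow_smul, det_updateRow_last_single, Fin.snoc_last,
    zero_smul, zero_add]
  rfl

variable {B : Module.Basis (Fin s) ℝ (Fin s → ℝ)}

theorem exists_mem_zSpanSet_last_eq_visitTime (hB : ∀ i, B i = phiProj s (v i.castSucc))
    (x : Fin s → ℝ) (k : ℤ) :
    ∃ ℓ ∈ zSpanSet v, ℓ (Fin.last s) = visitTime (v (Fin.last s) (Fin.last s))
        (fun i => v i.castSucc (Fin.last s)) (B.repr x) (B.repr (phiProj s (v (Fin.last s)))) k ∧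
      x + phiProj s ℓ ∈ ZSpan.fundamentalDomain B := by
  refine ⟨_, ⟨Fin.snoc (fun i => -⌊B.repr x i + k * B.repr (phiProj s (v (Fin.last s))) i⌋) k,
    rfl⟩, ?_, (add_phiProj_sum_mem_fundamentalDomain_iff hB x _).2 (by simp)⟩
  simp [Finset.sum_apply, Fin.sum_univ_castSucc, visitTime]
  ring

theorem modMem_iff_exists_visitTime_eq (hS3 : zSpanSet v = Lam s α)
    (hB : ∀ i, B i = phiProj s (v i.castSucc)) (x : Fin s → ℝ) (n : ℤ) :
    ModMem s (x + (n : ℝ) • α) (ZSpan.fundamentalDomain B) ↔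
      ∃ k, visitTime (v (Fin.last s) (Fin.last s)) (fun i => v i.castSucc (Fin.last s))
        (B.repr x) (B.repr (phiProj s (v (Fin.last s)))) k = n := by
  rw [modMem_add_smul_iff, ← hS3]
  constructor
  · rintro ⟨_, ⟨c, rfl⟩, hn, hmem⟩
    rw [add_phiProj_sum_mem_fundamentalDomain_iff hB] at hmem
    refine ⟨c (Fin.last s), ?_⟩
    rw [← hn]
    simp [Finset.sum_apply, Fin.sum_univ_castSucc, visitTime, hmem]
    ring
  · rintro ⟨k, hk⟩
    obtain ⟨ℓ, hℓ, hlast, hmem⟩ := exists_mem_zSpanSet_last_eq_visitTime hB x k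
    exact ⟨ℓ, hℓ, hlast.trans hk, hmem⟩

theorem exists_intCast_eq_visitTime (hS3 : zSpanSet v = Lam s α)
    (hB : ∀ i, B i = phiProj s (v i.castSucc)) (x : Fin s → ℝ) (k : ℤ) :
    ∃ n : ℤ, visitTime (v (Fin.last s) (Fin.last s)) (fun i => v i.castSucc (Fin.last s))
      (B.repr x) (B.repr (phiProj s (v (Fin.last s)))) k = n := by
  obtain ⟨ℓ, hℓ, hlast, -⟩ := exists_mem_zSpanSet_last_eq_visitTime hB x k
  rw [← hlast]
  exact exists_intCast_eq_last_of_mem_Lam (hS3 ▸ hℓ)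

theorem exists_basis_toReal_volume_eq (hS3 : zSpanSet v = Lam s α) {t : Fin s → ℝ}
    (ht : phiProj s (v (Fin.last s)) = ∑ i, t i • phiProj s (v i.castSucc))
    (hγ : 0 < v (Fin.last s) (Fin.last s) - ∑ i, t i * v i.castSucc (Fin.last s)) :
    ∃ B : Module.Basis (Fin s) ℝ (Fin s → ℝ), (∀ i, B i = phiProj s (v i.castSucc)) ∧
      (volume (ZSpan.fundamentalDomain B)).toReal
        = 1 / (v (Fin.last s) (Fin.last s) - ∑ i, t i * v i.castSucc (Fin.last s)) := by
  have hdet := abs_det_eq_one_of_zSpanSet_eq_Lam hS3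
  rw [det_eq_mul_det_of_phiProj_eq_sum ht, abs_mul, abs_of_pos hγ] at hdet
  obtain ⟨B, hB⟩ := exists_basis_coe_eq_of_det_ne_zero (b := fun i => phiProj s (v i.castSucc))
    fun h => by simp [h] at hdet
  refine ⟨B, fun i => congrFun hB i, ?_⟩
  rw [ZSpan.volume_fundamentalDomain, ENNReal.toReal_ofReal (abs_nonneg _), hB,
    eq_div_iff hγ.ne', mul_comm, hdet]

end SpecialBasis

open Classical in
theorem sum_indicator_modMem_eq_card {s : ℕ} (α : Fin s → ℝ) (A : Set (Fin s → ℝ))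
    (x : Fin s → ℝ) (N : ℕ) :
    ∑ n ∈ Finset.range N, Set.indicator {y | ModMem s y A} (fun _ => (1 : ℝ)) (x + n • α)
      = #((Finset.range N).filter fun n : ℕ => ModMem s (x + (n : ℝ) • α) A) := by
  rw [Finset.natCast_card_filter]
  simp [Set.indicator_apply, Nat.cast_smul_eq_nsmul]

theorem special_region_is_BRS_general
    (s : ℕ) (α : Fin s → ℝ)
    (A : Set (Fin s → ℝ)) (hA : IsSpecialRegion s α A) :
    IsBRS s α A := by
  classical
  obtain ⟨v, ⟨hS2, hS3, hS4⟩, rfl⟩ := hA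
  obtain ⟨t, ht, hvt⟩ := mem_specialRegionOf_iff.1 hS2
  set a := v (Fin.last s) (Fin.last s)
  set b : Fin s → ℝ := fun i => v i.castSucc (Fin.last s)
  have hb : ∀ I : Finset (Fin s), ∑ i ∈ I, b i < a := fun I => sub_pos.1 (hS4 I)
  have hγ : 0 < a - ∑ i, t i * b i :=
    sub_pos.2 (sum_mul_lt_of_forall_sum_lt hb fun i => Set.Ico_subset_Icc_self (ht i))
  obtain ⟨B, hB, hvol⟩ := exists_basis_toReal_volume_eq hS3 hvt hγ
  have hBt : ⇑(B.repr (phiProj s (v (Fin.last s)))) = t := by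
    simp_rw [hvt, ← hB, B.repr_sum_self]
  have hvisit := modMem_iff_exists_visitTime_eq hS3 hB
  have hint := exists_intCast_eq_visitTime hS3 hB
  simp only [hBt] at hvisit hint
  refine ⟨2 * (∑ i, |b i|) / (a - ∑ i, t i * b i) + 1, fun x N => ?_⟩
  rw [specialRegionOf_eq_fundamentalDomain hB, hvol, sum_indicator_modMem_eq_card,
    card_filter_range_eq_ncard (visitTime_strictMono hb ht).injective
      (fun n => by simpa using hvisit x n) (hint x), mul_one_div]
  simpa using abs_ncard_setOf_mem_Ico_sub_le hγ (abs_visitTime_sub_le a b (B.repr x) t)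
    (Nat.cast_nonneg N)

/-- For any totally irrational rotation `α` of `𝕋^s`, every special
region for `α` is a bounded remainder set. -/
theorem special_region_is_BRS
    (s : ℕ) (α : Fin s → ℝ) (hα : TotallyIrrational s α)
    (A : Set (Fin s → ℝ)) (hA : IsSpecialRegion s α A) :
    IsBRS s α A :=
  special_region_is_BRS_general s α A hA
end

section
/- Let α ∈ ℝ^s be totally irrational, Λ the lattice generated by (α,1), e_1, …, e_s, and let v_1, …, v_{s+1} be a ℤ-basis of Λ defining a special region A = φ(P(v_1, …, v_s)) (satisfying (S1)–(S4)). Then for each k ∈ ℤ, the set Λ ∩ H_k ∩ φ^{-1}(A) contains exactly one point, where H_k = span(v_1, …, v_s) + k v_{s+1} and φ is the projection to the first s coordinates. -/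
open MeasureTheory

/-! The vectors `v_1, …, v_{s+1}` form an `ℝ`-basis because `Λ` spans `ℝ^{s+1}`, so the points of
`Λ ∩ H_k` are exactly `∑ d_i v_i + k v_{s+1}` with `d ∈ ℤ^s`. Writing `φ(v_{s+1}) = ∑ t_i φ(v_i)`
by (S2), such a point projects to `∑ (d_i + k t_i) φ(v_i)`, which lies in
`A = P(φ(v_1), …, φ(v_s))` iff `d_i = -⌊k t_i⌋`, as soon as `φ(v_1), …, φ(v_s)` are independent.
That is where total irrationality enters: a dependence would put `e_{s+1}` into
`span(v_1, …, v_s)`, so the last coordinate functional of the basis `v` would be an integer-valued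
functional on `Λ` vanishing at `e_{s+1}`, and such a functional is zero. -/

open Module Submodule

section Ptope

variable {m : ℕ} {E F : Type*} [AddCommGroup E] [Module ℝ E] [AddCommGroup F] [Module ℝ F]

theorem zSpanSet_subset_span (v : Fin m → E) : zSpanSet v ⊆ span ℝ (Set.range v) := by
  rintro _ ⟨c, rfl⟩
  exact sum_mem fun i _ => smul_mem _ _ (subset_span (Set.mem_range_self i))

theorem image_Ptope (f : E →ₗ[ℝ] F) (v : Fin m → E) : f '' Ptope v = Ptope (f ∘ v) := by
  ext y
  constructor
  · rintro ⟨_, ⟨t, ht, rfl⟩, rfl⟩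
    exact ⟨t, ht, by simp [map_sum]⟩
  · rintro ⟨t, ht, rfl⟩
    exact ⟨_, ⟨t, ht, rfl⟩, by simp [map_sum]⟩

theorem sum_intCast_add_smul_mem_Ptope_iff {u : Fin m → E} (hu : LinearIndependent ℝ u)
    (d : Fin m → ℤ) (r : Fin m → ℝ) :
    ∑ i, ((d i : ℝ) + r i) • u i ∈ Ptope u ↔ d = fun i => -⌊r i⌋ := by
  constructor
  · rintro ⟨t, ht, heq⟩
    have hcoeff := Fintype.linearIndependent_iff.mp hu (fun i => (d i + r i) - t i)
      (by simp only [sub_smul, Finset.sum_sub_distrib, heq, sub_self])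
    funext i
    have hfloor : ⌊(d i : ℝ) + r i⌋ = 0 := by
      rw [Int.floor_eq_zero_iff, sub_eq_zero.mp (hcoeff i)]
      exact ht i
    rw [Int.floor_intCast_add] at hfloor
    omega
  · rintro rfl
    refine ⟨fun i => Int.fract (r i), fun i => ⟨Int.fract_nonneg _, Int.fract_lt_one _⟩, ?_⟩
    simp only [Int.cast_neg, Int.fract]
    congr! 2
    ring

end Ptope

section Lattice

variable {s : ℕ}

def phiProjLinear (s : ℕ) : (Fin (s+1) → ℝ) →ₗ[ℝ] (Fin s → ℝ) :=
  LinearMap.funLeft ℝ ℝ Fin.castSucc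

theorem coe_phiProjLinear : ⇑(phiProjLinear s) = phiProj s := rfl

theorem single_castSucc_mem_Lam (α : Fin s → ℝ) (p : Fin s) :
    Pi.single p.castSucc 1 ∈ Lam s α := by
  refine ⟨0, Pi.single p 1, ?_⟩
  ext j
  induction j using Fin.lastCases <;> simp [Pi.single_apply]

theorem alphaExt_mem_Lam (α : Fin s → ℝ) : alphaExt s α ∈ Lam s α :=
  ⟨1, 0, by ext j; induction j using Fin.lastCases <;> simp⟩

theorem alphaExt_eq_single_add_sum (α : Fin s → ℝ) :
    alphaExt s α = Pi.single (Fin.last s) 1 + ∑ p, α p • Pi.single p.castSucc 1 := by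
  ext j
  induction j using Fin.lastCases <;> simp [alphaExt, Finset.sum_apply, Pi.single_apply]

theorem span_Lam (α : Fin s → ℝ) : span ℝ (Lam s α) = ⊤ := by
  rw [eq_top_iff, ← (Pi.basisFun ℝ _).span_eq, span_le, Set.range_subset_iff]
  intro j
  simp only [Pi.basisFun_apply, SetLike.mem_coe]
  induction j using Fin.lastCases with
  | cast p => exact subset_span (single_castSucc_mem_Lam α p)
  | last =>
    have hlast : Pi.single (Fin.last s) 1 = alphaExt s α - ∑ p, α p • Pi.single p.castSucc 1 := by
      rw [alphaExt_eq_single_add_sum, add_sub_cancel_right]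
    rw [hlast]
    exact sub_mem (subset_span (alphaExt_mem_Lam α))
      (sum_mem fun p _ => smul_mem _ _ (subset_span (single_castSucc_mem_Lam α p)))

theorem linearIndependent_of_zSpanSet_eq_Lam {α : Fin s → ℝ} {v : Fin (s+1) → Fin (s+1) → ℝ}
    (hv : zSpanSet v = Lam s α) : LinearIndependent ℝ v := by
  refine linearIndependent_of_top_le_span_of_card_eq_finrank ?_ (by simp)
  rw [← span_Lam α, ← hv]
  exact span_le.mpr (zSpanSet_subset_span v)

/-- The integers `m_p = f(e_p)` and `f(α, 1) = ∑ m_p α_p` form a relation that total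
irrationality forbids unless `m = 0`. -/
theorem TotallyIrrational.dual_eq_zero {α : Fin s → ℝ} (hα : TotallyIrrational s α)
    (f : Dual ℝ (Fin (s+1) → ℝ)) (hf : ∀ x ∈ Lam s α, ∃ m : ℤ, f x = m)
    (hlast : f (Pi.single (Fin.last s) 1) = 0) : f = 0 := by
  choose m hm using fun p => hf _ (single_castSucc_mem_Lam α p)
  obtain ⟨n, hn⟩ := hf _ (alphaExt_mem_Lam α)
  have hrel : ∑ p, (m p : ℝ) * α p + ((-n : ℤ) : ℝ) = 0 := by
    rw [alphaExt_eq_single_add_sum, map_add, map_sum, hlast] at hn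
    simp only [map_smul, hm, smul_eq_mul, zero_add] at hn
    push_cast
    rw [← hn]
    simp only [mul_comm, sub_self, ← sub_eq_add_neg]
  have hm0 := (hα m (-n) hrel).1
  ext j
  induction j using Fin.lastCases with
  | cast p => simp [hm, hm0]
  | last => simpa using hlast

theorem linearIndependent_phiProj_castSucc {α : Fin s → ℝ} (hα : TotallyIrrational s α)
    {v : Fin (s+1) → Fin (s+1) → ℝ} (hv : zSpanSet v = Lam s α) :
    LinearIndependent ℝ (phiProj s ∘ v ∘ Fin.castSucc) := by
  have hind := linearIndependent_of_zSpanSet_eq_Lam hv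
  let b := basisOfLinearIndependentOfCardEqFinrank hind (by simp)
  have hb : ⇑b = v := coe_basisOfLinearIndependentOfCardEqFinrank _ _
  set f := b.coord (Fin.last s)
  have hf_int : ∀ x ∈ Lam s α, ∃ m : ℤ, f x = m := by
    rw [← hv]
    rintro _ ⟨c, rfl⟩
    refine ⟨c (Fin.last s), ?_⟩
    rw [← hb, Basis.coord_apply, Basis.repr_sum_self]
  have hf_span : span ℝ (Set.range (v ∘ Fin.castSucc)) ≤ LinearMap.ker f := by
    rw [span_le, Set.range_subset_iff]
    intro i
    simp [f, ← hb, Basis.repr_self, (Fin.castSucc_lt_last i).ne]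
  rw [← coe_phiProjLinear]
  refine (hind.comp _ (Fin.castSucc_injective _)).map ?_
  rw [disjoint_def]
  intro w hw hker
  have hw_eq : w = w (Fin.last s) • Pi.single (Fin.last s) 1 := by
    ext j
    induction j using Fin.lastCases with
    | cast p =>
      rw [show w p.castSucc = 0 from congrFun (LinearMap.mem_ker.mp hker) p]
      simp [(Fin.castSucc_lt_last p).ne]
    | last => simp
  by_contra hw0
  have hlast_ne : w (Fin.last s) ≠ 0 := fun h => hw0 (by rw [hw_eq, h, zero_smul])
  have hf_single : f (Pi.single (Fin.last s) 1) = 0 := by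
    have hfw : f w = 0 := hf_span hw
    rw [hw_eq, map_smul, smul_eq_mul] at hfw
    exact (mul_eq_zero.mp hfw).resolve_left hlast_ne
  have hf_last : f (v (Fin.last s)) = 1 := by simp [f, ← hb]
  rw [hα.dual_eq_zero f hf_int hf_single] at hf_last
  exact zero_ne_one hf_last

theorem mem_Lam_and_mem_Hplane_iff {α : Fin s → ℝ} {v : Fin (s+1) → Fin (s+1) → ℝ}
    (hv : zSpanSet v = Lam s α) (k : ℤ) (x : Fin (s+1) → ℝ) :
    x ∈ Lam s α ∧ x ∈ Hplane s v k ↔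
      ∃ d : Fin s → ℤ, x = ∑ i, (d i : ℝ) • v i.castSucc + (k : ℝ) • v (Fin.last s) := by
  constructor
  · rintro ⟨hx, c, rfl⟩
    rw [← hv] at hx
    obtain ⟨d, hd⟩ := hx
    rw [Fin.sum_univ_castSucc] at hd
    have hcoeff := Fintype.linearIndependent_iff.mp (linearIndependent_of_zSpanSet_eq_Lam hv)
      (Fin.snoc (fun i => c i - d i.castSucc) (k - d (Fin.last s)))
      (by simp [Fin.sum_univ_castSucc, sub_smul, Finset.sum_sub_distrib]
          rw [sub_add_sub_comm, hd, sub_self])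
    refine ⟨fun i => d i.castSucc, ?_⟩
    congr 1
    refine Finset.sum_congr rfl fun i _ => ?_
    have hci := hcoeff i.castSucc
    simp only [Fin.snoc_castSucc, sub_eq_zero] at hci
    rw [hci]
  · rintro ⟨d, rfl⟩
    refine ⟨?_, _, rfl⟩
    rw [← hv]
    exact ⟨Fin.snoc d k, by simp [Fin.sum_univ_castSucc]⟩

end Lattice

/-- For a special basis `v` of `Λ` with special region
`A = φ(P(v_1,…,v_s))`, each set `Λ ∩ H_k ∩ φ^{-1}(A)` contains exactly one point. -/
theorem unique_lattice_point_in_each_slab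
    (s : ℕ) (α : Fin s → ℝ) (hα : TotallyIrrational s α)
    (v : Fin (s+1) → (Fin (s+1) → ℝ)) (hv : IsSpecialBasis s α v) :
    ∀ k : ℤ, ∃! x : Fin (s+1) → ℝ,
      x ∈ Lam s α ∧ x ∈ Hplane s v k ∧ phiProj s x ∈ specialRegionOf s v := by
  intro k
  obtain ⟨⟨_, ⟨t, -, rfl⟩, ht⟩, hspan, -⟩ := hv
  set u := phiProj s ∘ v ∘ Fin.castSucc
  have hu : LinearIndependent ℝ u := linearIndependent_phiProj_castSucc hα hspan
  have hA : specialRegionOf s v = Ptope u := by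
    rw [specialRegionOf, ← coe_phiProjLinear, image_Ptope]
    rfl
  have hlast : phiProj s (v (Fin.last s)) = ∑ i, t i • u i := by
    rw [← ht, ← coe_phiProjLinear, map_sum]
    simp only [map_smul]
    rfl
  have hφ (d : Fin s → ℤ) : phiProj s (∑ i, (d i : ℝ) • v i.castSucc + (k : ℝ) • v (Fin.last s)) =
      ∑ i, ((d i : ℝ) + k * t i) • u i := by
    rw [← coe_phiProjLinear, map_add, map_sum, map_smul, coe_phiProjLinear, hlast]
    simp only [Finset.smul_sum, smul_smul, add_smul, Finset.sum_add_distrib]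
    rfl
  simp_rw [← and_assoc, mem_Lam_and_mem_Hplane_iff hspan, hA]
  refine ⟨_, ⟨⟨fun i => -⌊k * t i⌋, rfl⟩, ?_⟩, ?_⟩
  · rw [hφ, sum_intCast_add_smul_mem_Ptope_iff hu]
  · rintro _ ⟨⟨d, rfl⟩, hd⟩
    rw [hφ, sum_intCast_add_smul_mem_Ptope_iff hu] at hd
    rw [hd]
end

section
/- In the special-region construction step, suppose v_1, …, v_{s+1} satisfy (S1)–(S4), let v_j' = v_j − v_{s+1}, and let v_{s+1}' = v_{s+1} − b_j v_j' − ∑_{i≠j} b_i v_i for nonnegative integers b_i chosen so that φ(v_{s+1}') ∈ A' := φ(P(v_1, …, v_j', …, v_s)). Then the new basis v_1, …, v_j', …, v_s, v_{s+1}' satisfies φ_{s+1}(v_{s+1}') ≥ φ_{s+1}(v_{s+1}) > 0 and φ_{s+1}(v_j') < φ_{s+1}(v_j) ≤ 0, and satisfies condition (S4): φ_{s+1}(v_{s+1}') − ∑_{i∈I} φ_{s+1}(w_i) > 0 for every subset I, where w_i denotes the new basis vectors with index in {1,…,s}. -/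
open MeasureTheory

noncomputable section

/-!
Measure heights by the last coordinate. The old vectors `v_1, …, v_s` lie at height `≤ 0` and
`v_{s+1}` at positive height, so `v_j' = v_j − v_{s+1}` drops strictly below `v_j`, every new
`v_i` still has height `≤ 0`, and `v_{s+1}'` is `v_{s+1}` minus nonnegative multiples of vectors
of height `≤ 0`, hence no lower than `v_{s+1}`. Condition (S4) then only subtracts nonpositive
heights from a positive one.
-/

open Finset

section Heights

variable {E ι : Type*} [AddCommGroup E] [Module ℝ E] [DecidableEq ι]
  (ℓ : E →ₗ[ℝ] ℝ) {u : ι → E} {p : E}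

theorem map_sub_lt_map_of_pos (x : E) (hp : 0 < ℓ p) : ℓ (x - p) < ℓ x := by
  rw [map_sub]
  linarith

theorem map_ite_sub_nonpos (hu : ∀ i, ℓ (u i) ≤ 0) (hp : 0 ≤ ℓ p) (j i : ι) :
    ℓ (if i = j then u j - p else u i) ≤ 0 := by
  split_ifs
  · rw [map_sub]
    linarith [hu j]
  · exact hu i

theorem map_le_map_sub_smul_sub_sum [Fintype ι] (hu : ∀ i, ℓ (u i) ≤ 0) (hp : 0 ≤ ℓ p)
    (j : ι) (b : ι → ℕ) :
    ℓ p ≤ ℓ (p - (b j : ℝ) • (u j - p) - ∑ i ∈ univ.erase j, (b i : ℝ) • u i) := by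
  have hj : (b j : ℝ) * ℓ (u j - p) ≤ 0 :=
    mul_nonpos_of_nonneg_of_nonpos (Nat.cast_nonneg _) (by rw [map_sub]; linarith [hu j])
  have hrest : ∑ i ∈ univ.erase j, (b i : ℝ) * ℓ (u i) ≤ 0 :=
    sum_nonpos fun i _ => mul_nonpos_of_nonneg_of_nonpos (Nat.cast_nonneg _) (hu i)
  simp only [map_sub, map_sum, map_smul, smul_eq_mul] at hj hrest ⊢
  linarith

end Heights

theorem sub_sum_pos_of_nonpos {ι : Type*} {a : ℝ} {x : ι → ℝ} (ha : 0 < a)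
    (hx : ∀ i, x i ≤ 0) (I : Finset ι) : 0 < a - ∑ i ∈ I, x i := by
  linarith [sum_nonpos fun i (_ : i ∈ I) => hx i]

theorem construction_step_preserves_S4_general
    (s : ℕ)
    (v : Fin (s+1) → (Fin (s+1) → ℝ))
    (hneg : ∀ i : Fin s, v i.castSucc (Fin.last s) ≤ 0)
    (hpos : 0 < v (Fin.last s) (Fin.last s))
    (j : Fin s) (b : Fin s → ℕ)
    -- the new family `w` with `w_j = v_j' = v_j − v_{s+1}`:
    (w : Fin (s+1) → (Fin (s+1) → ℝ))
    (hw : w = Fin.snoc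
      (fun i : Fin s =>
        if i = j then v j.castSucc - v (Fin.last s) else v i.castSucc)
      (v (Fin.last s) - (b j : ℝ) • (v j.castSucc - v (Fin.last s)) -
        ∑ i ∈ Finset.univ.erase j, (b i : ℝ) • v i.castSucc)) :
    (v (Fin.last s) (Fin.last s) ≤ w (Fin.last s) (Fin.last s) ∧
      0 < v (Fin.last s) (Fin.last s)) ∧
    (w j.castSucc (Fin.last s) < v j.castSucc (Fin.last s) ∧
      v j.castSucc (Fin.last s) ≤ 0) ∧
    (∀ I : Finset (Fin s),
      0 < w (Fin.last s) (Fin.last s) - ∑ i ∈ I, w i.castSucc (Fin.last s)) := by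
  subst hw
  simp only [Fin.snoc_last, Fin.snoc_castSucc]
  let height : (Fin (s+1) → ℝ) →ₗ[ℝ] ℝ := LinearMap.proj (Fin.last s)
  have hlast : v (Fin.last s) (Fin.last s) ≤ _ :=
    map_le_map_sub_smul_sub_sum height hneg hpos.le j b
  refine ⟨⟨hlast, hpos⟩, ⟨map_sub_lt_map_of_pos height _ hpos, hneg j⟩, fun I => ?_⟩
  exact sub_sum_pos_of_nonpos (hpos.trans_le hlast)
    (map_ite_sub_nonpos height hneg hpos.le j) I

/-- In the construction step, with `v_j' = v_j − v_{s+1}` and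
`v_{s+1}' = v_{s+1} − b_j v_j' − ∑_{i≠j} b_i v_i` (`b_i ∈ ℕ`) chosen so that
`φ(v_{s+1}') ∈ A' = φ(P(v_1,…,v_j',…,v_s))`, the new family satisfies
`φ_{s+1}(v_{s+1}') ≥ φ_{s+1}(v_{s+1}) > 0`, `φ_{s+1}(v_j') < φ_{s+1}(v_j) ≤ 0`,
and condition (S4). -/
theorem construction_step_preserves_S4
    (s : ℕ) (α : Fin s → ℝ) (hα : TotallyIrrational s α)
    (hrange : ∀ i, α i ∈ Set.Ico (0:ℝ) 1)
    (v : Fin (s+1) → (Fin (s+1) → ℝ)) (hv : IsSpecialBasis s α v)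
    (hneg : ∀ i : Fin s, v i.castSucc (Fin.last s) ≤ 0)
    (hpos : 0 < v (Fin.last s) (Fin.last s))
    (j : Fin s) (b : Fin s → ℕ)
    -- the new family `w` with `w_j = v_j' = v_j − v_{s+1}`:
    (w : Fin (s+1) → (Fin (s+1) → ℝ))
    (hw : w = Fin.snoc
      (fun i : Fin s =>
        if i = j then v j.castSucc - v (Fin.last s) else v i.castSucc)
      (v (Fin.last s) - (b j : ℝ) • (v j.castSucc - v (Fin.last s)) -
        ∑ i ∈ Finset.univ.erase j, (b i : ℝ) • v i.castSucc))
    -- `φ(v_{s+1}') ∈ A'`: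
    (hA' : phiProj s (w (Fin.last s)) ∈ specialRegionOf s w) :
    (v (Fin.last s) (Fin.last s) ≤ w (Fin.last s) (Fin.last s) ∧
      0 < v (Fin.last s) (Fin.last s)) ∧
    (w j.castSucc (Fin.last s) < v j.castSucc (Fin.last s) ∧
      v j.castSucc (Fin.last s) ≤ 0) ∧
    (∀ I : Finset (Fin s),
      0 < w (Fin.last s) (Fin.last s) - ∑ i ∈ I, w i.castSucc (Fin.last s)) :=
  construction_step_preserves_S4_general s v hneg hpos j b w hw

end
end

section
/- Let α ∈ ℝ^s be totally irrational, A a bounded remainder set for the rotation by α with constant C, i.e. |#{0 ≤ n < N : nα + x ∈ A mod ℤ^s} − N|A|| ≤ C for all x and N. For fixed x, list the return times {n ∈ ℤ : nα + x ∈ A mod ℤ^s} = {ℓ_i}_{i∈ℤ} in increasing order with ℓ_{-1} < 0 ≤ ℓ_0. Then for all i ∈ ℤ, |ℓ_i − i/|A|| ≤ C/|A|. -/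
open MeasureTheory

noncomputable section

/-!
The visits of the orbit of `x` to `A` in a window `[a, b)` of times are `ℓ u, …, ℓ (v - 1)` for
suitable `u ≤ v`, so the Birkhoff sum of length `b - a` started at `x + aα` equals `v - u`, and the
bounded remainder property gives `|(v - u) - (b - a)|A|| ≤ C`. By the normalization
`ℓ (-1) < 0 ≤ ℓ 0`, the window `[0, ℓ i)` (for `i ≥ 0`) or `[ℓ i, 0)` (for `i < 0`) contains exactly
`|i|` visits.
-/

open Finset

lemma StrictMono.nonneg_iff {ℓ : ℤ → ℤ} (hℓ : StrictMono ℓ) (hneg : ℓ (-1) < 0)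
    (hnonneg : 0 ≤ ℓ 0) (j : ℤ) : 0 ≤ ℓ j ↔ 0 ≤ j := by
  refine ⟨fun hj => ?_, fun hj => hnonneg.trans (hℓ.monotone hj)⟩
  by_contra! hlt
  exact (hj.trans_lt ((hℓ.monotone (Int.le_sub_one_of_lt hlt)).trans_lt hneg)).false

open Classical in
lemma StrictMono.filter_Ico_mem_range {ℓ : ℤ → ℤ} (hℓ : StrictMono ℓ) {a b u v : ℤ}
    (hu : ∀ j, a ≤ ℓ j ↔ u ≤ j) (hv : ∀ j, ℓ j < b ↔ j < v) :
    {m ∈ Ico a b | m ∈ Set.range ℓ} = (Ico u v).map ⟨ℓ, hℓ.injective⟩ := by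
  ext m
  simp only [mem_filter, mem_Ico, mem_map, Function.Embedding.coeFn_mk, Set.mem_range]
  constructor
  · rintro ⟨⟨ha, hb⟩, j, rfl⟩
    exact ⟨j, ⟨(hu j).1 ha, (hv j).1 hb⟩, rfl⟩
  · rintro ⟨j, ⟨hj₁, hj₂⟩, rfl⟩
    exact ⟨⟨(hu j).2 hj₁, (hv j).2 hj₂⟩, j, rfl⟩

open Classical in
lemma sum_range_indicator_orbit {G : Type*} [AddCommGroup G] (B : Set G) (x α : G) (a b : ℤ) :
    ∑ n ∈ range (b - a).toNat, B.indicator (fun _ => (1 : ℝ)) (x + a • α + n • α)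
      = #{m ∈ Ico a b | x + m • α ∈ B} := by
  rw [← sum_boole, Int.Ico_eq_finset_map, sum_map]
  refine sum_congr rfl fun n _ => ?_
  simp [Set.indicator_apply, add_zsmul, add_assoc]

lemma abs_visit_count_sub_le {G : Type*} [AddCommGroup G] {B : Set G} {x α : G} {c C : ℝ}
    (hB : ∀ (y : G) (N : ℕ),
      |∑ n ∈ range N, B.indicator (fun _ => (1 : ℝ)) (y + n • α) - N * c| ≤ C)
    {ℓ : ℤ → ℤ} (hℓ : StrictMono ℓ) (hrange : {m : ℤ | x + m • α ∈ B} = Set.range ℓ)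
    {a b u v : ℤ} (hab : a ≤ b) (huv : u ≤ v)
    (hu : ∀ j, a ≤ ℓ j ↔ u ≤ j) (hv : ∀ j, ℓ j < b ↔ j < v) :
    |((v - u : ℤ) : ℝ) - ((b - a : ℤ) : ℝ) * c| ≤ C := by
  classical
  have hcount : #{m ∈ Ico a b | x + m • α ∈ B} = (v - u).toNat := by
    have hmem (m : ℤ) : x + m • α ∈ B ↔ m ∈ Set.range ℓ := by rw [← hrange]; rfl
    rw [filter_congr fun m _ => hmem m, hℓ.filter_Ico_mem_range hu hv, card_map, Int.card_Ico]
  have := hB (x + a • α) (b - a).toNat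
  rwa [sum_range_indicator_orbit, hcount, ← Int.cast_natCast,
    Int.toNat_of_nonneg (sub_nonneg.2 huv), ← Int.cast_natCast,
    Int.toNat_of_nonneg (sub_nonneg.2 hab)] at this

theorem return_times_close_to_arithmetic_general
    (s : ℕ) (α : Fin s → ℝ)
    (A : Set (Fin s → ℝ)) (hApos : 0 < (volume A).toReal)
    (C : ℝ)
    (hBRS : ∀ (y : Fin s → ℝ) (N : ℕ),
      |(∑ n ∈ Finset.range N,
          Set.indicator {z : Fin s → ℝ | ModMem s z A} (fun _ => (1:ℝ)) (y + n • α))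
        - N * (volume A).toReal| ≤ C)
    (x : Fin s → ℝ) (ℓ : ℤ → ℤ) (hmono : StrictMono ℓ)
    (hnorm : ℓ (-1) < 0 ∧ 0 ≤ ℓ 0)
    (hrange : {n : ℤ | ModMem s (x + n • α) A} = Set.range ℓ) :
    ∀ i : ℤ, |(ℓ i : ℝ) - (i : ℝ) / (volume A).toReal| ≤ C / (volume A).toReal := by
  intro i
  have hsign := hmono.nonneg_iff hnorm.1 hnorm.2
  have hdev : |(i : ℝ) - ℓ i * (volume A).toReal| ≤ C := by
    rcases le_or_gt 0 i with hi | hi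
    · -- count the visits in the window `[0, ℓ i)`
      simpa using abs_visit_count_sub_le hBRS hmono hrange ((hsign i).2 hi) hi
        (fun j => by simpa using hsign j) fun j => hmono.lt_iff_lt
    · -- count the visits in the window `[ℓ i, 0)`
      have hℓi : ℓ i ≤ 0 := (not_le.1 <| (hsign i).not.2 hi.not_ge).le
      have := abs_visit_count_sub_le hBRS hmono hrange hℓi hi.le
        (fun j => hmono.le_iff_le) fun j => by simpa using (hsign j).not
      rw [← abs_neg]
      convert this using 2
      push_cast
      ring
  rw [le_div_iff₀ hApos, ← abs_of_pos hApos, ← abs_mul, abs_of_pos hApos, sub_mul,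
    div_mul_cancel₀ _ hApos.ne', abs_sub_comm]
  exact hdev

/-- If `A` is a BRS for the totally irrational rotation by `α` with
uniform constant `C`, and `ℓ : ℤ → ℤ` is the increasing enumeration of the visit
times `{n ∈ ℤ : x + nα ∈ A mod ℤ^s}` normalized by `ℓ (-1) < 0 ≤ ℓ 0`, then
`|ℓ i − i/|A|| ≤ C/|A|` for all `i ∈ ℤ`. -/
theorem return_times_close_to_arithmetic
    (s : ℕ) (α : Fin s → ℝ) (hα : TotallyIrrational s α)
    (A : Set (Fin s → ℝ)) (hApos : 0 < (volume A).toReal)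
    (C : ℝ)
    (hBRS : ∀ (y : Fin s → ℝ) (N : ℕ),
      |(∑ n ∈ Finset.range N,
          Set.indicator {z : Fin s → ℝ | ModMem s z A} (fun _ => (1:ℝ)) (y + n • α))
        - N * (volume A).toReal| ≤ C)
    (x : Fin s → ℝ) (ℓ : ℤ → ℤ) (hmono : StrictMono ℓ)
    (hnorm : ℓ (-1) < 0 ∧ 0 ≤ ℓ 0)
    (hrange : {n : ℤ | ModMem s (x + n • α) A} = Set.range ℓ) :
    ∀ i : ℤ, |(ℓ i : ℝ) - (i : ℝ) / (volume A).toReal| ≤ C / (volume A).toReal :=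
  return_times_close_to_arithmetic_general s α A hApos C hBRS x ℓ hmono hnorm hrange
end
end

section
/- Let Y' = {(n_1, …, n_d) ∈ ℤ^d : n_1 α ∈ A − γ(n_2,…,n_d) mod ℤ^s}, where A is a BRS for the totally irrational rotation by α ∈ ℝ^s with constant C independent of the starting point. Then the map sending (ℓ_i(n_2,…,n_d), n_2, …, n_d) ↦ (i/|A|, n_2, …, n_d), where {ℓ_i(n_2,…,n_d)}_{i∈ℤ} is the increasing enumeration of {n_1 ∈ ℤ : n_1 α ∈ A − γ(n_2,…,n_d) mod ℤ^s} with ℓ_{-1} < 0 ≤ ℓ_0, is a bijection from Y' to the lattice |A|^{-1}ℤ × ℤ^{d-1} moving every point by at most C/|A| in sup-norm. Hence Y' is bounded distance to a lattice. -/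
open MeasureTheory

/-!
Fix a fibre `n`; since `ℓ n` enumerates its points increasingly with `ℓ n (-1) < 0 ≤ ℓ n 0`,
the integer window `[0, ℓ n i)` (for `i ≥ 0`, or `[ℓ n i, 0)` for `i < 0`) contains exactly
`|i|` points of the fibre. The bounded-remainder estimate applied to the orbit of `γ n` along
that window therefore reads `|i - ℓ n i * |A|| ≤ C`, and dividing by `|A|` bounds the
displacement of `(ℓ n i, n) ↦ (i / |A|, n)`, which is a bijection because `i ↦ i / |A|` is
injective.
-/

open Finset

theorem StrictMono.filter_Ico_mem_range_s13 {ℓ : ℤ → ℤ} (hℓ : StrictMono ℓ) {a b i j : ℤ}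
    (hia : ℓ (i - 1) < a) (hai : a ≤ ℓ i) (hjb : ℓ (j - 1) < b) (hbj : b ≤ ℓ j)
    [DecidablePred (· ∈ Set.range ℓ)] :
    {k ∈ Ico a b | k ∈ Set.range ℓ} = (Ico i j).map ⟨ℓ, hℓ.injective⟩ := by
  ext k
  simp only [mem_filter, mem_Ico, mem_map, Function.Embedding.coeFn_mk, Set.mem_range]
  constructor
  · rintro ⟨⟨hak, hkb⟩, t, rfl⟩
    have hit : i - 1 < t := hℓ.lt_iff_lt.mp (hia.trans_le hak)
    exact ⟨t, ⟨by omega, hℓ.lt_iff_lt.mp (hkb.trans_le hbj)⟩, rfl⟩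
  · rintro ⟨t, ⟨hit, htj⟩, rfl⟩
    exact ⟨⟨hai.trans (hℓ.monotone hit), (hℓ.monotone (by omega : t ≤ j - 1)).trans_lt hjb⟩,
      t, rfl⟩

theorem StrictMono.card_filter_Ico_mem_range {ℓ : ℤ → ℤ} (hℓ : StrictMono ℓ) {a b i j : ℤ}
    (hia : ℓ (i - 1) < a) (hai : a ≤ ℓ i) (hjb : ℓ (j - 1) < b) (hbj : b ≤ ℓ j)
    [DecidablePred (· ∈ Set.range ℓ)] :
    #{k ∈ Ico a b | k ∈ Set.range ℓ} = (j - i).toNat := by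
  rw [hℓ.filter_Ico_mem_range_s13 hia hai hjb hbj, card_map, Int.card_Ico]

theorem card_filter_Ico_eq_sum_indicator {G : Type*} [AddCommGroup G] (S : Set G)
    [DecidablePred (· ∈ S)] (α y : G) (a : ℤ) (N : ℕ) :
    (#{k ∈ Ico a (a + N) | k • α + y ∈ S} : ℝ) =
      ∑ n ∈ range N, S.indicator (fun _ => (1 : ℝ)) ((a • α + y) + n • α) := by
  rw [Int.Ico_eq_finset_map, add_sub_cancel_left, Int.toNat_natCast, filter_map, card_map,
    card_filter, Nat.cast_sum]
  refine sum_congr rfl fun n _ => ?_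
  have horbit : (Nat.castEmbedding.trans (addLeftEmbedding a) n) • α + y = a • α + y + n • α := by
    change (a + n : ℤ) • α + y = _
    rw [add_smul, natCast_zsmul]
    abel
  rw [Nat.cast_ite, Nat.cast_one, Nat.cast_zero, Set.indicator_apply]
  exact if_congr (by rw [Function.comp_apply, horbit]) rfl rfl

theorem abs_card_filter_Ico_sub_le {G : Type*} [AddCommGroup G] {S : Set G}
    [DecidablePred (· ∈ S)] {α : G} {v C : ℝ}
    (hS : ∀ (y : G) (N : ℕ),
      |∑ n ∈ range N, S.indicator (fun _ => (1 : ℝ)) (y + n • α) - N * v| ≤ C)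
    (y : G) {a b : ℤ} (hab : a ≤ b) :
    |(#{k ∈ Ico a b | k • α + y ∈ S} : ℝ) - (b - a) * v| ≤ C := by
  obtain ⟨N, rfl⟩ := Int.le.dest hab
  rw [card_filter_Ico_eq_sum_indicator]
  push_cast
  rw [add_sub_cancel_left]
  exact hS _ N

theorem StrictMono.abs_sub_mul_le_of_discrepancy {ℓ : ℤ → ℤ} (hℓ : StrictMono ℓ)
    [DecidablePred (· ∈ Set.range ℓ)]
    (hneg : ℓ (-1) < 0) (hnonneg : 0 ≤ ℓ 0) {v C : ℝ}
    (hdisc : ∀ a b : ℤ, a ≤ b → |(#{k ∈ Ico a b | k ∈ Set.range ℓ} : ℝ) - (b - a) * v| ≤ C)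
    (i : ℤ) : |i - ℓ i * v| ≤ C := by
  have hstep : ℓ (i - 1) < ℓ i := hℓ (by omega)
  rcases le_or_gt 0 i with hi | hi
  · have h := hdisc 0 (ℓ i) (hnonneg.trans (hℓ.monotone hi))
    rwa [hℓ.card_filter_Ico_mem_range (by simpa using hneg) hnonneg hstep le_rfl, sub_zero,
      show ((i.toNat : ℕ) : ℝ) = i by exact_mod_cast Int.toNat_of_nonneg hi, Int.cast_zero,
      sub_zero] at h
  · have h := hdisc (ℓ i) 0 ((hℓ.monotone (by omega : i ≤ -1)).trans hneg.le)
    rw [hℓ.card_filter_Ico_mem_range hstep le_rfl (by simpa using hneg) hnonneg, zero_sub,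
      show (((-i).toNat : ℕ) : ℝ) = -i by exact_mod_cast Int.toNat_of_nonneg (by omega)] at h
    rw [← abs_neg]
    convert h using 2
    push_cast
    ring

theorem StrictMono.abs_intCast_div_sub_le {G : Type*} [AddCommGroup G] {S : Set G}
    {α : G} {v C : ℝ} (hv : 0 < v)
    (hS : ∀ (y : G) (N : ℕ),
      |∑ n ∈ range N, S.indicator (fun _ => (1 : ℝ)) (y + n • α) - N * v| ≤ C)
    {y : G} {ℓ : ℤ → ℤ} (hℓ : StrictMono ℓ) (hneg : ℓ (-1) < 0) (hnonneg : 0 ≤ ℓ 0)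
    (hrange : {k : ℤ | k • α + y ∈ S} = Set.range ℓ) (i : ℤ) :
    |(i : ℝ) / v - ℓ i| ≤ C / v := by
  classical
  have h := hℓ.abs_sub_mul_le_of_discrepancy hneg hnonneg (fun a b hab => by
    simpa only [← hrange, Set.mem_ofPred_eq] using abs_card_filter_Ico_sub_le hS y hab) i
  rw [show (i : ℝ) / v - ℓ i = (i - ℓ i * v) / v by field_simp, abs_div, abs_of_pos hv]
  exact div_le_div_of_nonneg_right h hv.le

/-- Floors recover the integer coordinates of a lattice point and `invFun` inverts `ℓ n`;
the values off the lattice are irrelevant. -/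
noncomputable def reindex {ι : Type*} (ℓ : (ι → ℤ) → ℤ → ℤ) (v : ℝ) (p : ℝ × (ι → ℝ)) :
    ℝ × (ι → ℝ) :=
  ((Function.invFun (ℓ fun j => ⌊p.2 j⌋) ⌊p.1⌋ : ℤ) / v, p.2)

theorem reindex_apply {ι : Type*} {ℓ : (ι → ℤ) → ℤ → ℤ} (hℓ : ∀ n, (ℓ n).Injective) (v : ℝ)
    (n : ι → ℤ) (i : ℤ) :
    reindex ℓ v ((ℓ n i : ℝ), fun j => (n j : ℝ)) = ((i : ℝ) / v, fun j => (n j : ℝ)) := by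
  simp only [reindex, Int.floor_intCast, Function.leftInverse_invFun (hℓ n) i]

theorem Set.bijOn_range_of_comp_eq {ι α β : Type*} {e : ι → α} {f : ι → β} {F : α → β}
    (hF : F ∘ e = f) (hf : f.Injective) : Set.BijOn F (Set.range e) (Set.range f) := by
  subst hF
  rw [Set.range_comp]
  exact hf.injOn_range.bijOn_image

theorem Yprime_BD_to_lattice_general
    (s m : ℕ) (α : Fin s → ℝ)
    (A : Set (Fin s → ℝ)) (hApos : 0 < (volume A).toReal)
    (C : ℝ)
    (hBRS : ∀ (y : Fin s → ℝ) (N : ℕ),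
      |(∑ n ∈ Finset.range N,
          Set.indicator {z : Fin s → ℝ | ModMem s z A} (fun _ => (1:ℝ)) (y + n • α))
        - N * (volume A).toReal| ≤ C)
    (γ : (Fin m → ℤ) → (Fin s → ℝ))
    -- increasing enumerations of the fibers of `Y'`:
    (ℓ : (Fin m → ℤ) → ℤ → ℤ)
    (hmono : ∀ n, StrictMono (ℓ n))
    (hnorm : ∀ n, ℓ n (-1) < 0 ∧ 0 ≤ ℓ n 0)
    (hrange : ∀ n : Fin m → ℤ,
      {n₁ : ℤ | ModMem s (n₁ • α + γ n) A} = Set.range (ℓ n)) :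
    ∃ F : (ℝ × (Fin m → ℝ)) → (ℝ × (Fin m → ℝ)),
      (∀ (n : Fin m → ℤ) (i : ℤ),
        F ((ℓ n i : ℝ), fun j => (n j : ℝ)) =
          ((i : ℝ) / (volume A).toReal, fun j => (n j : ℝ))) ∧
      Set.BijOn F
        {p | ∃ (n₁ : ℤ) (n : Fin m → ℤ), ModMem s (n₁ • α + γ n) A ∧
          p = ((n₁ : ℝ), fun j => (n j : ℝ))}
        {q | ∃ (i : ℤ) (n : Fin m → ℤ),
          q = ((i : ℝ) / (volume A).toReal, fun j => (n j : ℝ))} ∧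
      (∀ p ∈ {p : ℝ × (Fin m → ℝ) | ∃ (n₁ : ℤ) (n : Fin m → ℤ),
          ModMem s (n₁ • α + γ n) A ∧ p = ((n₁ : ℝ), fun j => (n j : ℝ))},
        |(F p).1 - p.1| ≤ C / (volume A).toReal ∧ (F p).2 = p.2) := by
  set v := (volume A).toReal
  have hF := reindex_apply (fun n => (hmono n).injective) v
  have hY : {p | ∃ (n₁ : ℤ) (n : Fin m → ℤ), ModMem s (n₁ • α + γ n) A ∧
      p = ((n₁ : ℝ), fun j => (n j : ℝ))} =
      Set.range fun q : ℤ × (Fin m → ℤ) => ((ℓ q.2 q.1 : ℝ), fun j => (q.2 j : ℝ)) := by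
    ext p
    constructor
    · rintro ⟨_, n, hk, rfl⟩
      obtain ⟨i, rfl⟩ := (hrange n).subset hk
      exact ⟨(i, n), rfl⟩
    · rintro ⟨⟨i, n⟩, rfl⟩
      exact ⟨ℓ n i, n, (hrange n).superset ⟨i, rfl⟩, rfl⟩
  have hL : {q | ∃ (i : ℤ) (n : Fin m → ℤ), q = ((i : ℝ) / v, fun j => (n j : ℝ))} =
      Set.range fun q : ℤ × (Fin m → ℤ) => ((q.1 : ℝ) / v, fun j => (q.2 j : ℝ)) := by
    ext q
    simp only [Set.mem_ofPred_eq, Set.mem_range, Prod.exists, eq_comm]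
  have hlattice :
      (fun q : ℤ × (Fin m → ℤ) => ((q.1 : ℝ) / v, fun j => (q.2 j : ℝ))).Injective := by
    rintro ⟨i, n⟩ ⟨i', n'⟩ h
    simpa [Prod.ext_iff, funext_iff, hApos.ne'] using h
  refine ⟨reindex ℓ v, hF, ?_, ?_⟩
  · rw [hY, hL]
    exact Set.bijOn_range_of_comp_eq (funext fun q => hF q.2 q.1) hlattice
  · rw [hY]
    rintro _ ⟨⟨i, n⟩, rfl⟩
    rw [hF]
    exact ⟨(hmono n).abs_intCast_div_sub_le hApos hBRS (hnorm n).1 (hnorm n).2 (hrange n) i, rfl⟩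

/-- With `A` a BRS for `α` with uniform constant `C`, `γ` arbitrary,
and `Y' = {(n₁, n) ∈ ℤ × ℤ^m : n₁α + γ(n) ∈ A mod ℤ^s}` (written with
`d = m + 1`), the map `(ℓ_i(n), n) ↦ (i/|A|, n)` is a bijection from `Y'` onto
the lattice `|A|⁻¹ℤ × ℤ^m` moving each point by at most `C/|A|`; hence `Y'` is
bounded distance to a lattice. -/
theorem Yprime_BD_to_lattice
    (s m : ℕ) (α : Fin s → ℝ) (hα : TotallyIrrational s α)
    (A : Set (Fin s → ℝ)) (hApos : 0 < (volume A).toReal)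
    (C : ℝ)
    (hBRS : ∀ (y : Fin s → ℝ) (N : ℕ),
      |(∑ n ∈ Finset.range N,
          Set.indicator {z : Fin s → ℝ | ModMem s z A} (fun _ => (1:ℝ)) (y + n • α))
        - N * (volume A).toReal| ≤ C)
    (γ : (Fin m → ℤ) → (Fin s → ℝ))
    -- increasing enumerations of the fibers of `Y'`:
    (ℓ : (Fin m → ℤ) → ℤ → ℤ)
    (hmono : ∀ n, StrictMono (ℓ n))
    (hnorm : ∀ n, ℓ n (-1) < 0 ∧ 0 ≤ ℓ n 0)
    (hrange : ∀ n : Fin m → ℤ,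
      {n₁ : ℤ | ModMem s (n₁ • α + γ n) A} = Set.range (ℓ n)) :
    ∃ F : (ℝ × (Fin m → ℝ)) → (ℝ × (Fin m → ℝ)),
      (∀ (n : Fin m → ℤ) (i : ℤ),
        F ((ℓ n i : ℝ), fun j => (n j : ℝ)) =
          ((i : ℝ) / (volume A).toReal, fun j => (n j : ℝ))) ∧
      Set.BijOn F
        {p | ∃ (n₁ : ℤ) (n : Fin m → ℤ), ModMem s (n₁ • α + γ n) A ∧
          p = ((n₁ : ℝ), fun j => (n j : ℝ))}
        {q | ∃ (i : ℤ) (n : Fin m → ℤ),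
          q = ((i : ℝ) / (volume A).toReal, fun j => (n j : ℝ))} ∧
      (∀ p ∈ {p : ℝ × (Fin m → ℝ) | ∃ (n₁ : ℤ) (n : Fin m → ℤ),
          ModMem s (n₁ • α + γ n) A ∧ p = ((n₁ : ℝ), fun j => (n j : ℝ))},
        |(F p).1 - p.1| ≤ C / (volume A).toReal ∧ (F p).2 = p.2) :=
  Yprime_BD_to_lattice_general s m α A hApos C hBRS γ ℓ hmono hnorm hrange
end
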